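/- In the wall-crossing setup, set l_i := max(−D_i·e, 0) for 1 ≤ i ≤ m, let 𝒜̃ := {I ∪ {m+1} : I ∈ 𝒜_0^thick} ∪ {I : I ∈ 𝒜_0^thick and I ∩ M_0 ∈ 𝒜_0^thin}, and let Ũ := ⋃_{Ĩ∈𝒜̃} {z ∈ ℂ^{m+1} : z_i ≠ 0 for all i ∈ Ĩ}. Then the polynomial map F : ℂ^{m+1} → ℂ^m defined by F(z_1,…,z_m,z_{m+1}) := (z_1·z_{m+1}^{l_1}, …, z_m·z_{m+1}^{l_m}) maps Ũ into U_{ω_+}. -/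

import Mathlib

/- Formalization of a statement from "The Crepant Transformation Conjecture
for Toric Complete Intersections" (Coates–Iritani–Jiang).

GIT data: `𝕃 = ℤ^r` (modelled by `Fin r → ℤ`), characters `D_1, …, D_m ∈ 𝕃^∨`
(modelled by `D : Fin m → Fin r → ℤ`, viewing `𝕃^∨ ⊗ ℝ` as `Fin r → ℝ`). -/

open scoped Classical

noncomputable section

namespace CTC

/-- The image of the integral character `D i` in `𝕃^∨ ⊗ ℝ = ℝ^r`. -/
def DR {r m : ℕ} (D : Fin m → Fin r → ℤ) (i : Fin m) : Fin r → ℝ :=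
  fun a => (D i a : ℝ)

/-- Integer pairing `v · e` between `𝕃^∨` and `𝕃`. -/
def pairZ {r : ℕ} (v e : Fin r → ℤ) : ℤ := ∑ a, v a * e a

/-- Real pairing `v · e` between `𝕃^∨ ⊗ ℝ` and `𝕃`. -/
def pairR {r : ℕ} (v : Fin r → ℝ) (e : Fin r → ℤ) : ℝ := ∑ a, v a * (e a : ℝ)

/-- Rational pairing `D_i · f` between a character `D_i ∈ 𝕃^∨` and `f ∈ 𝕃 ⊗ ℚ`. -/
def dotDQ {r : ℕ} (Di : Fin r → ℤ) (f : Fin r → ℚ) : ℚ := ∑ a, (Di a : ℚ) * f a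

/-- `∠_I := { Σ_{i ∈ I} a_i D_i : a_i ∈ ℝ, a_i > 0 }`; in particular `∠_∅ = {0}`. -/
def angleCone {m : ℕ} {E : Type*} [AddCommMonoid E] [Module ℝ E]
    (D : Fin m → E) (I : Finset (Fin m)) : Set E :=
  { w | ∃ a : Fin m → ℝ, (∀ i ∈ I, 0 < a i) ∧ w = ∑ i ∈ I, a i • D i }

/-- The set of anticones `𝒜_ω := { I ⊆ {1,…,m} : ω ∈ ∠_I }`. -/
def anticones {r m : ℕ} (D : Fin m → Fin r → ℤ) (ω : Fin r → ℝ) :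
    Set (Finset (Fin m)) :=
  { I | ω ∈ angleCone (DR D) I }

/-- The extended ample cone `C_ω := ⋂_{I ∈ 𝒜_ω} ∠_I`. -/
def extAmpleCone {r m : ℕ} (D : Fin m → Fin r → ℤ) (ω : Fin r → ℝ) :
    Set (Fin r → ℝ) :=
  ⋂ I ∈ anticones D ω, angleCone (DR D) I

/-- `U_ω := ⋃_{I ∈ 𝒜_ω} { z ∈ ℂ^m : z_i ≠ 0 for all i ∈ I }`. -/
def Uset {r m : ℕ} (D : Fin m → Fin r → ℤ) (ω : Fin r → ℝ) : Set (Fin m → ℂ) :=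
  ⋃ I ∈ anticones D ω, { z : Fin m → ℂ | ∀ i ∈ I, z i ≠ 0 }

/-- `S_ω := { i : {1,…,m} ∖ {i} ∉ 𝒜_ω }`. -/
def Sset {r m : ℕ} (D : Fin m → Fin r → ℤ) (ω : Fin r → ℝ) : Finset (Fin m) :=
  Finset.univ.filter fun i => Finset.univ.erase i ∉ anticones D ω

/-- Assumption (⋆): `{1,…,m} ∈ 𝒜_ω`, and for each `I ∈ 𝒜_ω` the set
`{D_i : i ∈ I}` spans `𝕃^∨ ⊗ ℝ` over `ℝ`. -/
def AssumptionStar {r m : ℕ} (D : Fin m → Fin r → ℤ) (ω : Fin r → ℝ) : Prop :=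
  Finset.univ ∈ anticones D ω ∧
    ∀ I ∈ anticones D ω, Submodule.span ℝ (DR D '' (I : Set (Fin m))) = ⊤

/-- The wall `W = { v ∈ 𝕃^∨ ⊗ ℝ : v · e = 0 }`. -/
def wall {r : ℕ} (e : Fin r → ℤ) : Set (Fin r → ℝ) := { v | pairR v e = 0 }

/-- `M_+ := { i : D_i · e > 0 }`. -/
def Mplus {r m : ℕ} (D : Fin m → Fin r → ℤ) (e : Fin r → ℤ) : Finset (Fin m) :=
  Finset.univ.filter fun i => 0 < pairZ (D i) e

/-- `M_- := { i : D_i · e < 0 }`. -/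
def Mminus {r m : ℕ} (D : Fin m → Fin r → ℤ) (e : Fin r → ℤ) : Finset (Fin m) :=
  Finset.univ.filter fun i => pairZ (D i) e < 0

/-- `M_0 := { i : D_i · e = 0 }`. -/
def Mzero {r m : ℕ} (D : Fin m → Fin r → ℤ) (e : Fin r → ℤ) : Finset (Fin m) :=
  Finset.univ.filter fun i => pairZ (D i) e = 0

/-- The wall-crossing setup of §5.1 of the paper: two stability conditions
`ω_+`, `ω_-` satisfying Assumption (⋆) whose chambers are separated by the
wall `W = e^⊥`, satisfying the crepancy condition `Σ_i D_i · e = 0`, together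
with a stability condition `ω₀` in the relative interior of the common facet
`W ∩ closure C_+ = W ∩ closure C_-` (which spans the hyperplane `W`). -/
structure WallCrossingSetup (r m : ℕ) where
  D : Fin m → Fin r → ℤ
  ωp : Fin r → ℝ
  ωm : Fin r → ℝ
  ω₀ : Fin r → ℝ
  e : Fin r → ℤ
  hr : 0 < r
  hrm : r ≤ m
  starP : AssumptionStar D ωp
  starM : AssumptionStar D ωm
  he : e ≠ 0
  posP : ∀ v ∈ extAmpleCone D ωp, 0 < pairR v e
  negM : ∀ v ∈ extAmpleCone D ωm, pairR v e < 0
  crepant : (∑ i, pairZ (D i) e) = 0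
  wallEq : wall e ∩ closure (extAmpleCone D ωp)
      = wall e ∩ closure (extAmpleCone D ωm)
  wallSpanEq : Submodule.span ℝ (wall e ∩ closure (extAmpleCone D ωp))
      = Submodule.span ℝ (wall e)
  interior₀ : ω₀ ∈ intrinsicInterior ℝ (wall e ∩ closure (extAmpleCone D ωp))

/-- `𝒜_0^thin := { I ∈ 𝒜_0 : I ⊆ M_0 }`. -/
def thinA {r m : ℕ} (D : Fin m → Fin r → ℤ) (ω₀ : Fin r → ℝ) (e : Fin r → ℤ) :
    Set (Finset (Fin m)) :=
  { I | I ∈ anticones D ω₀ ∧ I ⊆ Mzero D e }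

/-- `𝒜_0^thick := { I ∈ 𝒜_0 : I ∩ M_+ ≠ ∅ and I ∩ M_- ≠ ∅ }`. -/
def thickA {r m : ℕ} (D : Fin m → Fin r → ℤ) (ω₀ : Fin r → ℝ) (e : Fin r → ℤ) :
    Set (Finset (Fin m)) :=
  { I | I ∈ anticones D ω₀ ∧ (I ∩ Mplus D e).Nonempty ∧ (I ∩ Mminus D e).Nonempty }

/-- `l_i := max(−D_i·e, 0)`. -/
def lexp {r m : ℕ} (D : Fin m → Fin r → ℤ) (e : Fin r → ℤ) (i : Fin m) : ℕ :=
  (max (-(pairZ (D i) e)) 0).toNat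

/-- The map `F(z_1,…,z_m,z_{m+1}) := (z_1 z_{m+1}^{l_1}, …, z_m z_{m+1}^{l_m})`
inducing the toric blow-down `f_+ : X̃ → X_+`. -/
def blowdownMap {r m : ℕ} (D : Fin m → Fin r → ℤ) (e : Fin r → ℤ)
    (z : Fin (m + 1) → ℂ) : Fin m → ℂ :=
  fun i => z (Fin.castSucc i) * z (Fin.last m) ^ lexp D e i

/-- The anticone set `𝒜̃` of the common toric blow-up `X̃`. -/
def AtildeSet {r m : ℕ} (D : Fin m → Fin r → ℤ) (ω₀ : Fin r → ℝ)
    (e : Fin r → ℤ) : Set (Finset (Fin (m + 1))) :=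
  { J | ∃ I ∈ thickA D ω₀ e, J = insert (Fin.last m) (I.image Fin.castSucc) }
    ∪ { J | ∃ I ∈ thickA D ω₀ e,
        I ∩ Mzero D e ∈ thinA D ω₀ e ∧ J = I.image Fin.castSucc }

/-- `Ũ := ⋃_{Ĩ ∈ 𝒜̃} { z ∈ ℂ^{m+1} : z_i ≠ 0 for i ∈ Ĩ }`. -/
def UtildeSet {r m : ℕ} (D : Fin m → Fin r → ℤ) (ω₀ : Fin r → ℝ)
    (e : Fin r → ℤ) : Set (Fin (m + 1) → ℂ) :=
  ⋃ J ∈ AtildeSet D ω₀ e, { z : Fin (m + 1) → ℂ | ∀ i ∈ J, z i ≠ 0 }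


/-! For `I ∈ 𝒜₀^thick` pick `j ∈ I ∩ M_+`. Pushing `ω₀` off the wall in the direction `D_j` lands
in `C_+`, and every point of `C_+` has exactly the anticones of `ω_+`: this is linear programming
duality, where (⋆) makes every basic solution representing `ω_+` nondegenerate. Since
`ω₀ + ε D_j ∈ ∠_{K ∪ {j}}` for `K ∈ 𝒜₀`, both `I` and `(I ∩ M₀) ∪ {j}` are anticones of `ω_+`. On the
first, the coordinates of `F z` are nonzero because `z_{m+1} ≠ 0`; on the second, because
`l_i = 0` there. -/

open Filter Topology

section AngleCone

variable {E : Type*} [AddCommGroup E] [Module ℝ E] {m : ℕ} {D : Fin m → E}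

lemma smul_mem_angleCone {K : Finset (Fin m)} {w : E} (hw : w ∈ angleCone D K) {t : ℝ}
    (ht : 0 < t) : t • w ∈ angleCone D K := by
  obtain ⟨a, ha, rfl⟩ := hw
  exact ⟨t • a, fun i hi => mul_pos ht (ha i hi), by simp [Finset.smul_sum, smul_smul]⟩

lemma add_mem_angleCone_union {K L : Finset (Fin m)} {v w : E} (hv : v ∈ angleCone D K)
    (hw : w ∈ angleCone D L) : v + w ∈ angleCone D (K ∪ L) := by
  obtain ⟨a, ha, rfl⟩ := hv
  obtain ⟨b, hb, rfl⟩ := hw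
  have hnn : ∀ (s : Finset (Fin m)) (f : Fin m → ℝ), (∀ i ∈ s, 0 < f i) →
      ∀ i, 0 ≤ if i ∈ s then f i else 0 := fun s f hf i => by
    split_ifs with h
    exacts [(hf i h).le, le_rfl]
  refine ⟨fun i => (if i ∈ K then a i else 0) + (if i ∈ L then b i else 0), fun i hi => ?_, ?_⟩
  · rcases Finset.mem_union.mp hi with hiK | hiL
    · exact add_pos_of_pos_of_nonneg (by simpa [hiK] using ha i hiK) (hnn L b hb i)
    · exact add_pos_of_nonneg_of_pos (hnn K a ha i) (by simpa [hiL] using hb i hiL)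
  · simp only [add_smul, Finset.sum_add_distrib, ite_smul, zero_smul, Finset.sum_ite_mem,
      Finset.union_inter_cancel_left, Finset.union_inter_cancel_right]

lemma smul_mem_angleCone_singleton (j : Fin m) {t : ℝ} (ht : 0 < t) :
    t • D j ∈ angleCone D {j} :=
  ⟨fun _ => t, fun _ _ => ht, by simp⟩

lemma exists_pos_forall_mul_lt {ι : Type*} (K : Finset ι) {a γ : ι → ℝ}
    (ha : ∀ i ∈ K, 0 < a i) : ∃ ε : ℝ, 0 < ε ∧ ∀ i ∈ K, ε * γ i < a i := by
  have hlim : ∀ i ∈ K, ∀ᶠ ε in 𝓝[>] (0 : ℝ), ε * γ i < a i := by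
    intro i hi
    have : Tendsto (fun ε : ℝ => ε * γ i) (𝓝 0) (𝓝 0) := by
      simpa using (tendsto_id (x := 𝓝 (0 : ℝ))).mul_const (γ i)
    exact (this.mono_left nhdsWithin_le_nhds).eventually (gt_mem_nhds (ha i hi))
  exact ((eventually_all_finset K).2 hlim |>.and self_mem_nhdsWithin).exists.imp
    fun ε h => ⟨h.2, h.1⟩

/-- Spreading a little of the weight of a spanning `K` onto the extra generators keeps every
coefficient positive. -/
lemma mem_angleCone_of_subset {K J : Finset (Fin m)}
    (hsp : Submodule.span ℝ (D '' (K : Set (Fin m))) = ⊤) {ω : E}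
    (hK : ω ∈ angleCone D K) (hKJ : K ⊆ J) : ω ∈ angleCone D J := by
  obtain ⟨a, ha, rfl⟩ := hK
  obtain ⟨γ, hγ⟩ := (Submodule.mem_span_image_finset_iff_exists_fun' ℝ).mp
    (hsp ▸ Submodule.mem_top : ∑ j ∈ J \ K, D j ∈ Submodule.span ℝ (D '' (K : Set (Fin m))))
  obtain ⟨ε, hε, hεa⟩ := exists_pos_forall_mul_lt K (γ := γ) ha
  have hrest : ε • ∑ j ∈ J \ K, D j ∈ angleCone D (J \ K) :=
    ⟨fun _ => ε, fun _ _ => hε, Finset.smul_sum⟩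
  have hmain : ∑ i ∈ K, (a i - ε * γ i) • D i ∈ angleCone D K :=
    ⟨fun i => a i - ε * γ i, fun i hi => sub_pos.mpr (hεa i hi), rfl⟩
  have hsplit : ∑ i ∈ K, a i • D i
      = ∑ i ∈ K, (a i - ε * γ i) • D i + ε • ∑ j ∈ J \ K, D j := by
    simp only [sub_smul, Finset.sum_sub_distrib, mul_smul, ← Finset.smul_sum, hγ]
    abel
  rw [hsplit]
  simpa [Finset.union_sdiff_of_subset hKJ] using add_mem_angleCone_union hmain hrest

lemma angleCone_eq_image (K : Finset (Fin m)) :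
    angleCone D K =
      Fintype.linearCombination ℝ (fun i : K => D i) '' Set.univ.pi fun _ => Set.Ioi 0 := by
  ext w
  simp only [angleCone, Set.mem_image, Set.mem_univ_pi, Set.mem_Ioi,
    Fintype.linearCombination_apply]
  constructor
  · rintro ⟨a, ha, rfl⟩
    exact ⟨fun i => a i, fun i => ha i i.2, Finset.sum_coe_sort K fun i => a i • D i⟩
  · rintro ⟨c, hc, rfl⟩
    refine ⟨fun i => if h : i ∈ K then c ⟨i, h⟩ else 0, fun i hi => by simpa [hi] using hc _, ?_⟩
    rw [← Finset.sum_coe_sort K]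
    simp

lemma convex_angleCone (K : Finset (Fin m)) : Convex ℝ (angleCone D K) := by
  rw [angleCone_eq_image]
  exact (convex_pi fun _ _ => convex_Ioi 0).linear_image _

lemma isOpen_angleCone [TopologicalSpace E] [IsTopologicalAddGroup E] [ContinuousSMul ℝ E]
    [T2Space E] [FiniteDimensional ℝ E] {K : Finset (Fin m)}
    (hsp : Submodule.span ℝ (D '' (K : Set (Fin m))) = ⊤) : IsOpen (angleCone D K) := by
  have hsurj : Function.Surjective (Fintype.linearCombination ℝ (fun i : K => D i)) := by
    rw [← LinearMap.range_eq_top, Fintype.range_linearCombination, ← hsp]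
    congr 1
    ext w
    simp
  rw [angleCone_eq_image]
  exact LinearMap.isOpenMap_of_finiteDimensional _ hsurj _
    (isOpen_set_pi Set.finite_univ fun _ _ => isOpen_Ioi)

end AngleCone

section NonnegReps

variable {E : Type*} [AddCommGroup E] [Module ℝ E] {m : ℕ} {D : Fin m → E} {ω : E}

lemma exists_ratio_test {ι : Type*} {K : Finset ι} {c g : ι → ℝ} (hc : ∀ i ∈ K, 0 < c i)
    (hg : ∃ i ∈ K, 0 < g i) :
    ∃ t : ℝ, 0 < t ∧ (∀ i ∈ K, t * g i ≤ c i) ∧ ∃ i ∈ K, t * g i = c i := by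
  obtain ⟨i₁, hi₁, hmin⟩ := Finset.exists_min_image (K.filter (0 < g ·)) (fun i => c i / g i)
    (hg.imp fun i hi => Finset.mem_filter.mpr hi)
  obtain ⟨hi₁K, hg₁⟩ := Finset.mem_filter.mp hi₁
  have ht : 0 < c i₁ / g i₁ := div_pos (hc i₁ hi₁K) hg₁
  refine ⟨c i₁ / g i₁, ht, fun i hi => ?_, i₁, hi₁K, div_mul_cancel₀ _ hg₁.ne'⟩
  rcases lt_or_ge 0 (g i) with hgi | hgi
  · exact (le_div_iff₀ hgi).mp (hmin i (Finset.mem_filter.mpr ⟨hi, hgi⟩))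
  · exact (mul_nonpos_of_nonneg_of_nonpos ht.le hgi).trans (hc i hi).le

/-- `ω ∈ ∠_K` iff `K` is the positive support of one of these. -/
def nonnegReps (D : Fin m → E) (ω : E) : Set (Fin m → ℝ) :=
  {c | 0 ≤ c ∧ ∑ i, c i • D i = ω}

def posSupport (c : Fin m → ℝ) : Finset (Fin m) :=
  Finset.univ.filter fun i => 0 < c i

/-- The basic feasible solutions of the linear program over `nonnegReps D ω`. -/
def basicReps (D : Fin m → E) (ω : E) : Set (Fin m → ℝ) :=
  {c | c ∈ nonnegReps D ω ∧ LinearIndepOn ℝ D (posSupport c : Set (Fin m))}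

lemma eq_zero_of_notMem_posSupport {c : Fin m → ℝ} (hc : 0 ≤ c) {i : Fin m}
    (hi : i ∉ posSupport c) : c i = 0 :=
  le_antisymm (not_lt.mp fun h => hi (Finset.mem_filter.mpr ⟨Finset.mem_univ i, h⟩)) (hc i)

lemma sum_posSupport {c : Fin m → ℝ} (hc : 0 ≤ c) :
    ∑ i ∈ posSupport c, c i • D i = ∑ i, c i • D i :=
  Finset.sum_subset (Finset.subset_univ _) fun i _ hi => by
    rw [eq_zero_of_notMem_posSupport hc hi, zero_smul]

lemma mem_angleCone_posSupport {c : Fin m → ℝ} (hc : c ∈ nonnegReps D ω) :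
    ω ∈ angleCone D (posSupport c) :=
  ⟨c, fun _ hi => (Finset.mem_filter.mp hi).2, by rw [sum_posSupport hc.1, hc.2]⟩

lemma nonnegReps_nonempty {K : Finset (Fin m)} (h : ω ∈ angleCone D K) :
    (nonnegReps D ω).Nonempty := by
  obtain ⟨a, ha, rfl⟩ := h
  refine ⟨fun i => if i ∈ K then a i else 0, fun i => ?_, ?_⟩
  · dsimp only
    split_ifs with hi
    exacts [(ha i hi).le, le_rfl]
  · simp [ite_smul, Finset.sum_ite_mem]

lemma sub_smul_mem_nonnegReps {c g : Fin m → ℝ} (hc : c ∈ nonnegReps D ω)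
    (hg : ∑ i, g i • D i = 0) {t : ℝ} (ht : ∀ i, t * g i ≤ c i) : c - t • g ∈ nonnegReps D ω :=
  ⟨fun i => by simpa using ht i, by
    simp [sub_smul, Finset.sum_sub_distrib, mul_smul, ← Finset.smul_sum, hg, hc.2]⟩

lemma exists_sub_smul_mem_nonnegReps {c g : Fin m → ℝ} (hc : c ∈ nonnegReps D ω)
    (hg : ∑ i, g i • D i = 0) (hout : ∀ i ∉ posSupport c, g i ≤ 0)
    (hpos : ∃ i ∈ posSupport c, 0 < g i) :
    ∃ t : ℝ, 0 < t ∧ c - t • g ∈ nonnegReps D ω ∧ ∃ i ∈ posSupport c, (c - t • g) i = 0 := by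
  obtain ⟨t, ht, hle, i₁, hi₁, heq⟩ :=
    exists_ratio_test (fun i hi => (Finset.mem_filter.mp hi).2) hpos
  refine ⟨t, ht, sub_smul_mem_nonnegReps hc hg fun i => ?_, i₁, hi₁, by simp [heq]⟩
  by_cases hi : i ∈ posSupport c
  · exact hle i hi
  · exact (mul_nonpos_of_nonneg_of_nonpos ht.le (hout i hi)).trans (hc.1 i)

/-- Conic Carathéodory: reduce the support along a linear relation among its generators. -/
lemma exists_mem_basicReps (hne : (nonnegReps D ω).Nonempty) :
    (basicReps D ω).Nonempty := by
  obtain ⟨c, hc⟩ := hne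
  induction hn : (posSupport c).card using Nat.strong_induction_on generalizing c with
  | _ n ih =>
  by_cases hli : LinearIndepOn ℝ D (posSupport c : Set (Fin m))
  · exact ⟨c, hc, hli⟩
  have reduce : ∀ g : Fin m → ℝ, ∑ i, g i • D i = 0 → (∀ i ∉ posSupport c, g i = 0) →
      (∃ i ∈ posSupport c, 0 < g i) → (basicReps D ω).Nonempty := by
    intro g hg hout hpos
    obtain ⟨t, -, hc', i₁, hi₁, hzero⟩ :=
      exists_sub_smul_mem_nonnegReps hc hg (fun i hi => (hout i hi).le) hpos
    have hsub : posSupport (c - t • g) ⊂ posSupport c := by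
      refine Finset.ssubset_iff_of_subset (fun i hi => ?_) |>.mpr
        ⟨i₁, hi₁, fun h => (Finset.mem_filter.mp h).2.ne' hzero⟩
      by_contra hic
      have := (Finset.mem_filter.mp hi).2
      simp [hout i hic, eq_zero_of_notMem_posSupport hc.1 hic] at this
    exact ih _ (hn ▸ Finset.card_lt_card hsub) _ hc' rfl
  obtain ⟨f, hf, i, hi, hfi⟩ := not_linearIndepOn_finset_iff.mp hli
  have hrel : ∀ s : ℝ, ∑ j, (if j ∈ posSupport c then s * f j else 0) • D j = 0 := fun s => by
    simp [ite_smul, Finset.sum_ite_mem, mul_smul, ← Finset.smul_sum, hf]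
  have hout : ∀ s : ℝ, ∀ j ∉ posSupport c, (if j ∈ posSupport c then s * f j else 0) = 0 :=
    fun s j hj => if_neg hj
  rcases hfi.lt_or_gt with hneg | hpos
  · exact reduce _ (hrel (-1)) (hout (-1)) ⟨i, hi, by simpa [hi] using hneg⟩
  · exact reduce _ (hrel 1) (hout 1) ⟨i, hi, by simpa [hi] using hpos⟩

lemma eq_of_posSupport_eq {c c' : Fin m → ℝ} (hc : c ∈ basicReps D ω)
    (hc' : c' ∈ nonnegReps D ω) (h : posSupport c = posSupport c') : c = c' := by
  funext i
  by_cases hi : i ∈ posSupport c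
  · have hrel : ∑ j ∈ posSupport c, (c - c') j • D j = 0 := by
      simp only [Pi.sub_apply, sub_smul, Finset.sum_sub_distrib]
      rw [sum_posSupport hc.1.1, h, sum_posSupport hc'.1, hc.1.2, hc'.2, sub_self]
    exact sub_eq_zero.mp (linearIndepOn_finset_iff.mp hc.2 _ hrel i hi)
  · rw [eq_zero_of_notMem_posSupport hc.1.1 hi,
      eq_zero_of_notMem_posSupport hc'.1 (h ▸ hi)]

lemma finite_basicReps : (basicReps D ω).Finite :=
  Set.Finite.of_finite_image (Set.toFinite _) fun _ hc _ hc' h => eq_of_posSupport_eq hc hc'.1 h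

end NonnegReps

section DualCertificate

variable {E : Type*} [AddCommGroup E] [Module ℝ E] [FiniteDimensional ℝ E] {m : ℕ}
  {D : Fin m → E} {ω : E}

/-- A simplex pivot. Since every support spans (`hspan`), the pivoted solution, supported on
at most `finrank E` generators, is again basic. -/
lemma exists_basicReps_cost_lt
    (hspan : ∀ c ∈ nonnegReps D ω, Submodule.span ℝ (D '' (posSupport c : Set (Fin m))) = ⊤)
    {cost : Fin m → ℝ} (hcost : 0 ≤ cost) {c : Fin m → ℝ} (hc : c ∈ basicReps D ω)
    {g : Fin m → ℝ} {i₀ : Fin m} (hg : ∑ i, g i • D i = 0) (hgi₀ : g i₀ ≤ 0)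
    (hout : ∀ i ∉ posSupport c, i ≠ i₀ → g i = 0) (hgcost : 0 < ∑ i, g i * cost i) :
    ∃ c' ∈ basicReps D ω, ∑ i, c' i * cost i < ∑ i, c i * cost i := by
  have hout' : ∀ i ∉ posSupport c, g i ≤ 0 := fun i hi => by
    by_cases h : i = i₀
    · exact h ▸ hgi₀
    · exact (hout i hi h).le
  have hpos : ∃ i ∈ posSupport c, 0 < g i := by
    by_contra! h
    have : ∑ i, g i * cost i ≤ 0 := Finset.sum_nonpos fun i _ =>
      mul_nonpos_of_nonpos_of_nonneg
        (if hi : i ∈ posSupport c then h i hi else hout' i hi) (hcost i)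
    linarith
  obtain ⟨t, ht, hc', i₁, hi₁, hzero⟩ := exists_sub_smul_mem_nonnegReps hc.1 hg hout' hpos
  have hsupp : posSupport (c - t • g) ⊆ (insert i₀ (posSupport c)).erase i₁ := by
    intro i hi
    have hpos_i := (Finset.mem_filter.mp hi).2
    refine Finset.mem_erase.mpr ⟨fun h => hpos_i.ne' (h ▸ hzero), ?_⟩
    by_contra hiK
    simp only [Finset.mem_insert, not_or] at hiK
    simp [hout i hiK.2 hiK.1, eq_zero_of_notMem_posSupport hc.1.1 hiK.2] at hpos_i
  have hcard : (posSupport (c - t • g)).card ≤ Module.finrank ℝ E := calc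
    _ ≤ ((insert i₀ (posSupport c)).erase i₁).card := Finset.card_le_card hsupp
    _ ≤ (posSupport c).card := by
      rw [Finset.card_erase_of_mem (Finset.mem_insert_of_mem hi₁)]
      have := Finset.card_insert_le i₀ (posSupport c)
      omega
    _ ≤ Module.finrank ℝ E := by simpa using hc.2.fintype_card_le_finrank
  refine ⟨c - t • g, ⟨hc', ?_⟩, ?_⟩
  · apply linearIndependent_of_top_le_span_of_card_le_finrank
    · rw [← Set.image_eq_range, hspan _ hc']
    · simpa using hcard
  · simp only [Pi.sub_apply, Pi.smul_apply, smul_eq_mul, sub_mul, Finset.sum_sub_distrib,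
      mul_assoc, ← Finset.mul_sum]
    linarith [mul_pos ht hgcost]

/-- LP duality for `min ∑ cᵢ costᵢ` over `nonnegReps D ω`, read off an optimal basic solution:
`φ` has reduced costs `costᵢ - φ (D i) ≥ 0`, with equality on the optimal support. -/
theorem exists_dual_certificate
    (hspan : ∀ c ∈ nonnegReps D ω, Submodule.span ℝ (D '' (posSupport c : Set (Fin m))) = ⊤)
    (hne : (nonnegReps D ω).Nonempty) {cost : Fin m → ℝ} (hcost : 0 ≤ cost) :
    ∃ c ∈ nonnegReps D ω, ∃ φ : E →ₗ[ℝ] ℝ,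
      (∀ i ∈ posSupport c, φ (D i) = cost i) ∧ ∀ i, φ (D i) ≤ cost i := by
  obtain ⟨c, hc, hmin⟩ := Set.exists_min_image (basicReps D ω) (fun c => ∑ i, c i * cost i)
    finite_basicReps (exists_mem_basicReps hne)
  have hspanK := hspan c hc.1
  let B : Module.Basis (posSupport c) ℝ E := .mk hc.2 (by rw [← Set.image_eq_range, hspanK])
  let φ := B.constr ℝ fun i => cost i
  have hφK : ∀ i ∈ posSupport c, φ (D i) = cost i := fun i hi => by
    have hB : B ⟨i, hi⟩ = D i := Module.Basis.mk_apply _ _ _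
    rw [← hB]
    exact B.constr_basis ℝ _ _
  refine ⟨c, hc.1, φ, hφK, fun i₀ => ?_⟩
  by_contra! hgt
  have hi₀ : i₀ ∉ posSupport c := fun h => (hφK i₀ h ▸ hgt).false
  obtain ⟨v, hv⟩ := (Submodule.mem_span_image_finset_iff_exists_fun' ℝ).mp
    (hspanK ▸ Submodule.mem_top : D i₀ ∈ Submodule.span ℝ (D '' (posSupport c : Set (Fin m))))
  have hφv : φ (D i₀) = ∑ i ∈ posSupport c, v i * cost i := by
    rw [← hv, map_sum]
    exact Finset.sum_congr rfl fun i hi => by rw [map_smul, hφK i hi, smul_eq_mul]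
  let g : Fin m → ℝ := fun i => (if i ∈ posSupport c then v i else 0) - if i = i₀ then 1 else 0
  obtain ⟨c', hc', hlt⟩ := exists_basicReps_cost_lt hspan hcost hc (g := g) (i₀ := i₀)
    (by simp [g, sub_smul, ite_smul, Finset.sum_sub_distrib, Finset.sum_ite_mem, hv])
    (by simp [g, hi₀])
    (fun i hi hne => by simp [g, hi, hne])
    (by simp [g, sub_mul, ite_mul, Finset.sum_sub_distrib, Finset.sum_ite_mem, ← hφv, hgt])
  exact (hmin c' hc').not_gt hlt

/-- Take the dual certificate for the cost `1` off `J`: it is `≤ 0` at `x` through `J`, and `> 0`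
at `x` through the optimal support unless that support lies inside `J`. -/
theorem mem_angleCone_of_forall_mem_angleCone {x : E}
    (hspan : ∀ K, ω ∈ angleCone D K → Submodule.span ℝ (D '' (K : Set (Fin m))) = ⊤)
    {K₀ : Finset (Fin m)} (hK₀ : ω ∈ angleCone D K₀)
    (hx : ∀ K, ω ∈ angleCone D K → x ∈ angleCone D K)
    {J : Finset (Fin m)} (hJ : x ∈ angleCone D J) : ω ∈ angleCone D J := by
  obtain ⟨c, hc, φ, hφK, hφ⟩ := exists_dual_certificate
    (fun c hc => hspan _ (mem_angleCone_posSupport hc)) (nonnegReps_nonempty hK₀)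
    (cost := fun i => if i ∈ J then 0 else 1) (fun i => by dsimp only; split_ifs <;> norm_num)
  have hωK := mem_angleCone_posSupport hc
  by_cases hKJ : posSupport c ⊆ J
  · exact mem_angleCone_of_subset (hspan _ hωK) hωK hKJ
  obtain ⟨i₂, hi₂K, hi₂J⟩ := Finset.not_subset.mp hKJ
  have hφx_nonpos : φ x ≤ 0 := by
    obtain ⟨a, ha, rfl⟩ := hJ
    simp only [map_sum, map_smul, smul_eq_mul]
    exact Finset.sum_nonpos fun i hi =>
      mul_nonpos_of_nonneg_of_nonpos (ha i hi).le (by simpa [hi] using hφ i)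
  have hφx_pos : 0 < φ x := by
    obtain ⟨b, hb, rfl⟩ := hx _ hωK
    simp only [map_sum, map_smul, smul_eq_mul]
    rw [Finset.sum_congr rfl fun i hi => by rw [hφK i hi]]
    exact Finset.sum_pos' (fun i hi => mul_nonneg (hb i hi).le (by split_ifs <;> norm_num))
      ⟨i₂, hi₂K, by simpa [hi₂J] using hb i₂ hi₂K⟩
  linarith

end DualCertificate

section Perturbation

variable {E : Type*} [AddCommGroup E] [Module ℝ E] [TopologicalSpace E]

lemma eventually_mem_of_mem_intrinsicInterior {s : Set E} {x : E}
    (hx : x ∈ intrinsicInterior ℝ s) : ∀ᶠ y in 𝓝 x, y ∈ affineSpan ℝ s → y ∈ s := by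
  obtain ⟨y, hy, rfl⟩ := mem_intrinsicInterior.mp hx
  obtain ⟨u, hu, hus⟩ := (mem_nhds_subtype _ _ _).mp (mem_interior_iff_mem_nhds.mp hy)
  filter_upwards [hu] with z hz hzs using hus (show (⟨z, hzs⟩ : affineSpan ℝ s) ∈ _ from hz)

/-- Write `ω₀ + ε • d = λ • p + (1 - λ) • u` with `ψ u = 0`, i.e. `λ = ε ψ d / ψ p`. As `ε → 0⁺`,
`u → ω₀`, so `u ∈ closure C` eventually, and such a combination lies in the open convex `C`. -/
lemma exists_pos_add_smul_mem [IsTopologicalAddGroup E] [ContinuousSMul ℝ E] {C : Set E}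
    (hCo : IsOpen C) (hCc : Convex ℝ C) (ψ : E →ₗ[ℝ] ℝ) {p ω₀ d : E} (hp : p ∈ C)
    (hψp : 0 < ψ p) (hψd : 0 < ψ d) (hψω₀ : ψ ω₀ = 0)
    (hnear : ∀ᶠ u in 𝓝 ω₀, ψ u = 0 → u ∈ closure C) :
    ∃ ε : ℝ, 0 < ε ∧ ω₀ + ε • d ∈ C := by
  let lam : ℝ → ℝ := fun ε => ε * ψ d / ψ p
  let u : ℝ → E := fun ε => (1 - lam ε)⁻¹ • (ω₀ + ε • d - lam ε • p)
  have hlam : Tendsto lam (𝓝[>] 0) (𝓝 0) := by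
    have : Continuous lam := by fun_prop
    simpa [lam] using (this.tendsto 0).mono_left nhdsWithin_le_nhds
  have hu : Tendsto u (𝓝[>] 0) (𝓝 ω₀) := by
    have : ContinuousAt u 0 := by
      refine ContinuousAt.smul (ContinuousAt.inv₀ (by fun_prop) (by simp [lam])) (by fun_prop)
    simpa [u, lam] using this.tendsto.mono_left nhdsWithin_le_nhds
  have hψu : ∀ ε, ψ (u ε) = 0 := fun ε => by
    simp only [u, lam, map_smul, map_sub, map_add, hψω₀, smul_eq_mul]
    field_simp
    ring
  obtain ⟨ε, hε, hlam1, huC⟩ : ∃ ε, 0 < ε ∧ lam ε < 1 ∧ u ε ∈ closure C :=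
    (eventually_mem_nhdsWithin.and ((hlam.eventually (gt_mem_nhds one_pos)).and
      ((hu.eventually hnear).mono fun ε h => h (hψu ε)))).exists
  have hlam0 : 0 < lam ε := div_pos (mul_pos hε hψd) hψp
  have hcomb : lam ε • p + (1 - lam ε) • u ε = ω₀ + ε • d := by
    simp only [u, smul_smul, mul_inv_cancel₀ (sub_pos.mpr hlam1).ne', one_smul]
    abel
  refine ⟨ε, hε, ?_⟩
  rw [← hcomb, ← hCo.interior_eq]
  exact hCc.combo_interior_closure_mem_interior (hCo.interior_eq.symm ▸ hp) huC hlam0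
    (sub_pos.mpr hlam1).le (by ring)

end Perturbation

section ExtendedAmpleCone

variable {r m : ℕ} {D : Fin m → Fin r → ℤ} {ω : Fin r → ℝ}

lemma mem_extAmpleCone_iff {v : Fin r → ℝ} :
    v ∈ extAmpleCone D ω ↔ ∀ I ∈ anticones D ω, v ∈ angleCone (DR D) I :=
  Set.mem_iInter₂

lemma self_mem_extAmpleCone : ω ∈ extAmpleCone D ω :=
  mem_extAmpleCone_iff.mpr fun _ hI => hI

lemma isOpen_extAmpleCone (h : AssumptionStar D ω) : IsOpen (extAmpleCone D ω) :=
  (Set.toFinite _).isOpen_biInter fun I hI => isOpen_angleCone (h.2 I hI)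

lemma convex_extAmpleCone : Convex ℝ (extAmpleCone D ω) :=
  convex_iInter₂ fun I _ => convex_angleCone I

lemma zero_mem_closure_extAmpleCone : (0 : Fin r → ℝ) ∈ closure (extAmpleCone D ω) := by
  have hcont : Continuous fun t : ℝ => t • ω := by fun_prop
  have : Tendsto (fun t : ℝ => t • ω) (𝓝[>] 0) (𝓝 0) := by
    simpa using (hcont.tendsto 0).mono_left nhdsWithin_le_nhds
  exact mem_closure_of_tendsto this <| eventually_mem_nhdsWithin.mono fun t ht =>
    mem_extAmpleCone_iff.mpr fun I hI => smul_mem_angleCone hI ht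

lemma mem_anticones_of_mem_extAmpleCone (h : AssumptionStar D ω) {x : Fin r → ℝ}
    (hx : x ∈ extAmpleCone D ω) {J : Finset (Fin m)} (hJ : x ∈ angleCone (DR D) J) :
    J ∈ anticones D ω :=
  mem_angleCone_of_forall_mem_angleCone h.2 h.1 (fun K hK => mem_extAmpleCone_iff.mp hx K hK) hJ

end ExtendedAmpleCone

def pairRLinear {r : ℕ} (e : Fin r → ℤ) : (Fin r → ℝ) →ₗ[ℝ] ℝ where
  toFun v := pairR v e
  map_add' v w := by simp [pairR, add_mul, Finset.sum_add_distrib]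
  map_smul' c v := by simp [pairR, Finset.mul_sum, mul_assoc]

lemma pairR_DR {r m : ℕ} (D : Fin m → Fin r → ℤ) (e : Fin r → ℤ) (i : Fin m) :
    pairR (DR D i) e = pairZ (D i) e := by
  simp [pairR, pairZ, DR]

lemma lexp_eq_zero {r m : ℕ} {D : Fin m → Fin r → ℤ} {e : Fin r → ℤ} {i : Fin m}
    (h : 0 ≤ pairZ (D i) e) : lexp D e i = 0 := by
  simp [lexp, h]

namespace WallCrossingSetup

variable {r m : ℕ} (W : WallCrossingSetup r m)

/-- Near `ω₀`, the wall lies in `closure C_+`: the affine span of the facet is the whole wall,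
because the facet contains `0` and spans `W`. -/
lemma eventually_mem_closure_extAmpleCone :
    ∀ᶠ u in 𝓝 W.ω₀, pairR u W.e = 0 → u ∈ closure (extAmpleCone W.D W.ωp) := by
  set G := wall W.e ∩ closure (extAmpleCone W.D W.ωp)
  have h0 : (0 : Fin r → ℝ) ∈ G := ⟨by simp [wall, pairR], zero_mem_closure_extAmpleCone⟩
  have hwall : wall W.e ⊆ affineSpan ℝ G := fun u hu => by
    rw [← Set.insert_eq_of_mem h0, affineSpan_insert_zero, W.wallSpanEq]
    exact Submodule.subset_span hu
  filter_upwards [eventually_mem_of_mem_intrinsicInterior W.interior₀] with u hu hu0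
  exact (hu (hwall hu0)).2

lemma exists_add_smul_mem_extAmpleCone {j : Fin m} (hj : j ∈ Mplus W.D W.e) :
    ∃ ε : ℝ, 0 < ε ∧ W.ω₀ + ε • DR W.D j ∈ extAmpleCone W.D W.ωp :=
  exists_pos_add_smul_mem (isOpen_extAmpleCone W.starP) convex_extAmpleCone (pairRLinear W.e)
    self_mem_extAmpleCone (W.posP _ self_mem_extAmpleCone)
    (by
      change (0 : ℝ) < pairR _ _
      exact pairR_DR W.D W.e j ▸ Int.cast_pos.mpr (Finset.mem_filter.mp hj).2)
    (intrinsicInterior_subset W.interior₀).1 W.eventually_mem_closure_extAmpleCone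

lemma insert_mem_anticones_plus {K : Finset (Fin m)} (hK : K ∈ anticones W.D W.ω₀)
    {j : Fin m} (hj : j ∈ Mplus W.D W.e) : insert j K ∈ anticones W.D W.ωp := by
  obtain ⟨ε, hε, hC⟩ := W.exists_add_smul_mem_extAmpleCone hj
  refine mem_anticones_of_mem_extAmpleCone W.starP hC ?_
  rw [Finset.insert_eq, Finset.union_comm]
  exact add_mem_angleCone_union hK (smul_mem_angleCone_singleton j hε)

end WallCrossingSetup

/-- The map `F` sends `Ũ` into `U_{ω_+}` (proof of Lemma 6.4 of the paper). -/
theorem blowdown_maps_into {r m : ℕ} (W : WallCrossingSetup r m) :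
    ∀ z ∈ UtildeSet W.D W.ω₀ W.e, blowdownMap W.D W.e z ∈ Uset W.D W.ωp := by
  intro z hz
  obtain ⟨J, hJ, hzJ⟩ := Set.mem_iUnion₂.mp hz
  rcases hJ with ⟨I, ⟨hI, ⟨j, hj⟩, -⟩, rfl⟩ | ⟨I, ⟨-, ⟨j, hj⟩, -⟩, ⟨hthin, -⟩, rfl⟩
  · obtain ⟨hjI, hjM⟩ := Finset.mem_inter.mp hj
    have hIp : I ∈ anticones W.D W.ωp := by
      simpa [Finset.insert_eq_of_mem hjI] using W.insert_mem_anticones_plus hI hjM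
    refine Set.mem_iUnion₂.mpr ⟨I, hIp, fun i hi => mul_ne_zero ?_ (pow_ne_zero _ ?_)⟩
    · exact hzJ _ (Finset.mem_insert_of_mem (Finset.mem_image_of_mem _ hi))
    · exact hzJ _ (Finset.mem_insert_self _ _)
  · obtain ⟨hjI, hjM⟩ := Finset.mem_inter.mp hj
    refine Set.mem_iUnion₂.mpr ⟨_, W.insert_mem_anticones_plus hthin hjM, fun i hi => ?_⟩
    have ⟨hiI, hi0⟩ : i ∈ I ∧ 0 ≤ pairZ (W.D i) W.e := by
      rcases Finset.mem_insert.mp hi with rfl | hi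
      · exact ⟨hjI, (Finset.mem_filter.mp hjM).2.le⟩
      · obtain ⟨hiI, hiM⟩ := Finset.mem_inter.mp hi
        exact ⟨hiI, (Finset.mem_filter.mp hiM).2.ge⟩
    simpa [blowdownMap, lexp_eq_zero hi0] using hzJ _ (Finset.mem_image_of_mem _ hiI)

end CTC
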